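/- Let F be a finite field of characteristic 2 (F = F_{2^r}) and let n be even. Let x_1, …, x_{2n} ∈ F satisfy: (i) x_{n+i} = l + x_i for i = 1, …, n for some nonzero l ∈ F, (ii) x_i ≠ x_j for all i ≠ j with 1 ≤ i, j ≤ 2n, and (iii) Σ_{i∈R} x_i ≠ 0 for every subset R ⊆ {1, …, 2n} with |R| = n. Let V_1 = V_⊥((x_1, …, x_n); {n−1}) and V_2 = V_⊥((x_{n+1}, …, x_{2n}); {n−1}). Then V_1 and V_2 are invertible and V_1^{-1}V_2 is an involutory MDS matrix, i.e., (V_1^{-1}V_2)^2 = I_n and every square submatrix of V_1^{-1}V_2 is nonsingular. -/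

import Mathlib

/-- Generalized Vandermonde matrix: `(i,j)` entry `x j ^ e i`, where `e` lists
the row exponents in increasing order. -/
def gvand {F : Type*} [Field F] {n : ℕ} (x : Fin n → F) (e : Fin n → ℕ) :
    Matrix (Fin n) (Fin n) F :=
  Matrix.of fun i j => x j ^ e i

/-- Row exponents `0, 1, …, n-2, n` of `V_⊥(x; {n-1})`. -/
def expOmitPen (n : ℕ) (i : Fin n) : ℕ := if (i : ℕ) = n - 1 then n else (i : ℕ)

/-- Row exponents `0, 2, 3, …, n` of `V_⊥(x; {1})`. -/
def expOmitOne (n : ℕ) (i : Fin n) : ℕ := if (i : ℕ) = 0 then 0 else (i : ℕ) + 1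

/-- Row exponents `0, 2, 3, …, n-1, n+1` of `V_⊥(x; {1,n})`. -/
def expOmitOneN (n : ℕ) (i : Fin n) : ℕ :=
  if (i : ℕ) = 0 then 0 else if (i : ℕ) = n - 1 then n + 1 else (i : ℕ) + 1

/-- A square matrix is MDS if every square submatrix of it is nonsingular. -/
def IsMDS {F : Type*} [Field F] {n : ℕ} (A : Matrix (Fin n) (Fin n) F) : Prop :=
  ∀ (k : ℕ) (r c : Fin k → Fin n), Function.Injective r → Function.Injective c →
    (A.submatrix r c).det ≠ 0

/-- A square matrix `A` of order `n` is NMDS if the block matrix `[I | A]` satisfies: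
(i) every `n-1` of its columns are linearly independent, (ii) some `n` of its columns
are linearly dependent, and (iii) every `n+1` of its columns span a space of dimension `n`. -/
def IsNMDSMatrix {F : Type*} [Field F] {n : ℕ} (A : Matrix (Fin n) (Fin n) F) : Prop :=
  (∀ S : Finset (Fin n ⊕ Fin n), S.card = n - 1 →
      LinearIndependent F
        (fun j : S => (Matrix.fromCols (1 : Matrix (Fin n) (Fin n) F) A).transpose j.1)) ∧
  (∃ S : Finset (Fin n ⊕ Fin n), S.card = n ∧
      ¬ LinearIndependent F
        (fun j : S => (Matrix.fromCols (1 : Matrix (Fin n) (Fin n) F) A).transpose j.1)) ∧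
  (∀ S : Finset (Fin n ⊕ Fin n), S.card = n + 1 →
      Module.finrank F (Submodule.span F
        ((fun j => (Matrix.fromCols (1 : Matrix (Fin n) (Fin n) F) A).transpose j) ''
          (S : Set (Fin n ⊕ Fin n)))) = n)

open Polynomial Finset

section Aux

lemma succAbove_pen_aux (m : ℕ) (a : Fin (m+1)) :
    (((⟨m, by omega⟩ : Fin (m+2)).succAbove a : ℕ)) = expOmitPen (m+1) a := by
  have ha := a.isLt
  simp only [Fin.succAbove, expOmitPen, Fin.lt_def, Fin.coe_castSucc]
  split_ifs <;> simp_all [Fin.val_succ] <;> omega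

lemma ioi_castSucc_aux (m : ℕ) (i : Fin (m+1)) : Finset.Ioi (Fin.castSucc i) =
    insert (Fin.last (m+1)) ((Finset.Ioi i).map Fin.castSuccOrderEmb.toEmbedding) := by
  ext j
  induction j using Fin.lastCases with
  | last => simp [Fin.castSucc_lt_last]
  | cast k =>
    simp [Fin.castSucc_lt_castSucc_iff, (Fin.castSucc_lt_last k).ne]
    exact ⟨fun h => ⟨k, h, rfl⟩, fun ⟨a, ha, h⟩ => by rw [← @Fin.castSucc_injective (m+1) a k h]; exact ha⟩

lemma expOmitPen_le {n : ℕ} (i : Fin n) : expOmitPen n i ≤ n := by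
  have := i.isLt; simp only [expOmitPen]; split_ifs <;> omega

lemma expOmitPen_inj {n : ℕ} : Function.Injective (expOmitPen n) := by
  intro a b h
  have ha := a.isLt; have hb := b.isLt
  simp only [expOmitPen] at h
  apply Fin.ext
  split_ifs at h <;> omega

lemma expOmitPen_image {n : ℕ} :
    Finset.image (expOmitPen n) Finset.univ = (Finset.range (n+1)).erase (n-1) := by
  ext t
  simp only [Finset.mem_image, Finset.mem_erase, Finset.mem_range, Finset.mem_univ, true_and]
  constructor
  · rintro ⟨a, rfl⟩
    have := a.isLt
    simp only [expOmitPen]; split_ifs <;> omega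
  · rintro ⟨h1, h2⟩
    by_cases ht : t = n
    · have hn0 : n ≠ 0 := by omega
      exact ⟨⟨n-1, by omega⟩, by simp [expOmitPen, ht]⟩
    · exact ⟨⟨t, by omega⟩, by simp only [expOmitPen]; rw [if_neg (by omega)]⟩

variable {F : Type*} [Field F]

lemma vand_snoc_aux (m : ℕ) (x : Fin (m+1) → F) :
    (Matrix.vandermonde (Fin.snoc (fun k => C (x k)) X : Fin (m+2) → F[X])).det
    = C (∏ i, ∏ j ∈ Ioi i, (x j - x i)) * ∏ i, (X - C (x i)) := by
  set v : Fin (m+2) → F[X] := Fin.snoc (fun k => C (x k)) X with hv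
  rw [Matrix.det_vandermonde, Fin.prod_univ_castSucc]
  have hlast : ∏ j ∈ Ioi (Fin.last (m+1)), (v j - v (Fin.last (m+1))) = 1 := by
    have : Finset.Ioi (Fin.last (m+1)) = ∅ := by
      ext a; simp [(Fin.le_last a).not_gt]
    rw [this, Finset.prod_empty]
  rw [hlast, mul_one]
  have hstep : ∀ i : Fin (m+1), ∏ j ∈ Ioi (Fin.castSucc i), (v j - v i.castSucc)
      = (X - C (x i)) * ∏ j ∈ Ioi i, C (x j - x i) := by
    intro i
    rw [ioi_castSucc_aux, Finset.prod_insert (by rw [Finset.mem_map]; rintro ⟨a, _, ha⟩; exact (Fin.castSucc_lt_last a).ne ha), Finset.prod_map]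
    have h1 : v (Fin.last (m+1)) - v i.castSucc = X - C (x i) := by
      simp [hv, Fin.snoc_castSucc, Fin.snoc_last]
    rw [h1]
    congr 1
    refine Finset.prod_congr rfl fun j _ => ?_
    show v (Fin.castSuccOrderEmb.toEmbedding j) - v i.castSucc = _
    simp [hv, Fin.castSuccOrderEmb, Fin.snoc_castSucc, C_sub]
  calc ∏ i : Fin (m+1), ∏ j ∈ Ioi (Fin.castSucc i), (v j - v i.castSucc)
      = ∏ i : Fin (m+1), ((X - C (x i)) * ∏ j ∈ Ioi i, C (x j - x i)) :=
        Finset.prod_congr rfl fun i _ => hstep i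
    _ = C (∏ i, ∏ j ∈ Ioi i, (x j - x i)) * ∏ i, (X - C (x i)) := by
        rw [Finset.prod_mul_distrib, mul_comm]
        congr 1
        simp only [map_prod]

lemma det_gvand_pen (m : ℕ) (x : Fin (m+1) → F) :
    (gvand x (expOmitPen (m+1))).det
      = (∑ i, x i) * ∏ i, ∏ j ∈ Ioi i, (x j - x i) := by
  set v : Fin (m+2) → F[X] := Fin.snoc (fun k => C (x k)) X with hv
  have key : ∑ i : Fin (m+2), (-1)^((i:ℕ) + (m+1)) * X^(i:ℕ)
          * C ((gvand x (fun a => (Fin.succAbove i a : ℕ))).det)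
      = C (∏ i, ∏ j ∈ Ioi i, (x j - x i)) * ∏ i, (X - C (x i)) := by
    rw [← vand_snoc_aux]
    rw [show (Matrix.vandermonde v).det = (Matrix.of fun i j : Fin (m+2) => v j ^ (i:ℕ)).det by
      rw [← Matrix.det_transpose (Matrix.vandermonde v)]
      congr 1]
    rw [Matrix.det_succ_column _ (Fin.last (m+1))]
    refine (Finset.sum_congr rfl fun i _ => ?_).symm
    have h1 : (Matrix.of fun i j : Fin (m+2) => v j ^ (i:ℕ)) i (Fin.last (m+1)) = X ^ (i:ℕ) := by
      simp [hv, Fin.snoc_last]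
    have h2 : ((Matrix.of fun i j : Fin (m+2) => v j ^ (i:ℕ)).submatrix i.succAbove
        (Fin.last (m+1)).succAbove)
        = (C : F →+* F[X]).mapMatrix (gvand x (fun a => (Fin.succAbove i a : ℕ))) := by
      ext a b
      simp [hv, Fin.succAbove_last, Fin.snoc_castSucc, gvand, RingHom.mapMatrix_apply,
        Matrix.map_apply, map_pow]
    rw [h1, h2, ← RingHom.map_det]
    simp [Fin.val_last]
  have hc := congrArg (fun p : F[X] => p.coeff m) key
  rw [Polynomial.finset_sum_coeff] at hc
  have hL : ∀ i : Fin (m+2), ((-1)^((i:ℕ) + (m+1)) * X^(i:ℕ)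
        * C ((gvand x (fun a => (Fin.succAbove i a : ℕ))).det)).coeff m
      = if (i:ℕ) = m then (-1)^((i:ℕ)+(m+1)) * (gvand x (fun a => (Fin.succAbove i a : ℕ))).det
        else 0 := by
    intro i
    rw [mul_comm ((-1 : F[X])^((i:ℕ)+(m+1)) * X^(i:ℕ)) _, ← mul_assoc]
    rw [show (C ((gvand x (fun a => (Fin.succAbove i a : ℕ))).det) * (-1 : F[X])^((i:ℕ)+(m+1)))
        = C ((gvand x (fun a => (Fin.succAbove i a : ℕ))).det * (-1)^((i:ℕ)+(m+1))) by
      simp [map_mul, map_pow]]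
    rw [Polynomial.coeff_C_mul, Polynomial.coeff_X_pow]
    by_cases h : (i:ℕ) = m <;> simp [h, mul_comm] <;> simp [Ne.symm h]
  rw [Finset.sum_congr rfl (fun i _ => hL i)] at hc
  rw [Finset.sum_eq_single (⟨m, by omega⟩ : Fin (m+2))
      (fun j _ hj => by
        rw [if_neg]
        intro h; exact hj (Fin.ext h))
      (by intro h; exact absurd (Finset.mem_univ _) h)] at hc
  rw [if_pos rfl] at hc
  have hQ : (∏ i : Fin (m+1), (X - C (x i))).coeff m = -∑ i, x i := by
    have h := prod_X_sub_C_coeff_card_pred (univ : Finset (Fin (m+1))) x (by simp)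
    simpa using h
  rw [Polynomial.coeff_C_mul, hQ] at hc
  have hodd : Odd ((((⟨m, by omega⟩ : Fin (m+2)) : ℕ)) + (m+1)) := ⟨m, by simp; ring⟩
  rw [hodd.neg_one_pow] at hc
  have hfun : (fun a => ((Fin.succAbove (⟨m, by omega⟩ : Fin (m+2)) a : ℕ))) = expOmitPen (m+1) :=
    funext fun a => succAbove_pen_aux m a
  rw [hfun] at hc
  have h2 : -(gvand x (expOmitPen (m+1))).det
      = -((∑ i, x i) * ∏ i, ∏ j ∈ Ioi i, (x j - x i)) := by
    have h3 : -1 * (gvand x (expOmitPen (m+1))).det = -(gvand x (expOmitPen (m+1))).det := by ring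
    rw [← h3, hc]; ring
  exact neg_injective h2

lemma gvand_det_ne_zero {n N : ℕ} (hn0 : n ≠ 0) (x : Fin N → F)
    (hx : Function.Injective x)
    (hsum : ∀ R : Finset (Fin N), R.card = n → ∑ i ∈ R, x i ≠ 0)
    (φ : Fin n → Fin N) (hφ : Function.Injective φ)
    (hdet : (gvand (x ∘ φ) (expOmitPen n)).det
      = (∑ i, (x ∘ φ) i) * ∏ i, ∏ j ∈ Ioi i, ((x ∘ φ) j - (x ∘ φ) i)) :
    (gvand (x ∘ φ) (expOmitPen n)).det ≠ 0 := by
  rw [hdet]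
  apply mul_ne_zero
  · have hcard : (Finset.image φ Finset.univ).card = n := by
      rw [Finset.card_image_of_injective _ hφ, Finset.card_univ, Fintype.card_fin]
    have h := hsum (Finset.image φ Finset.univ) hcard
    rwa [Finset.sum_image (fun a _ b _ h => hφ h)] at h
  · refine Finset.prod_ne_zero_iff.2 fun i _ => Finset.prod_ne_zero_iff.2 fun j hj => ?_
    exact sub_ne_zero.2 fun h => (Finset.mem_Ioi.1 hj).ne' (hφ (hx h))

variable [CharP F 2]

lemma shift_row {n : ℕ} (hn : Even n) (hn0 : n ≠ 0) (l x : F) (i : Fin n) :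
    (l + x) ^ expOmitPen n i
      = ∑ k : Fin n, (Nat.choose (expOmitPen n i) (expOmitPen n k) : F)
          * l ^ (expOmitPen n i - expOmitPen n k) * x ^ expOmitPen n k := by
  set m := expOmitPen n i with hm
  set f : ℕ → F := fun t => (Nat.choose m t : F) * l ^ (m - t) * x ^ t with hf
  have H1 : ∑ k : Fin n, f (expOmitPen n k) = ∑ t ∈ Finset.image (expOmitPen n) Finset.univ, f t :=
    (Finset.sum_image (fun a _ b _ h => expOmitPen_inj h)).symm
  have hfn1 : f (n-1) = 0 := by
    rcases Nat.lt_or_ge (m) (n-1) with h | h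
    · simp [hf, Nat.choose_eq_zero_of_lt h]
    · have hmn : m = n := by
        have := expOmitPen_le i
        have : m ≠ n - 1 := by
          simp only [hm, expOmitPen]
          split_ifs with h' <;> omega
        omega
      have hch : (Nat.choose m (n-1) : F) = 0 := by
        have h1 : Nat.choose m (n-1) = n := by
          rw [hmn, Nat.choose_symm (by omega : 1 ≤ n), Nat.choose_one_right]
        rw [h1]
        obtain ⟨r, rfl⟩ := hn
        have h2 : (2 : F) = 0 := by exact_mod_cast CharP.cast_eq_zero F 2
        push_cast
        rw [show (r:F) + r = 2 * r by ring, h2, zero_mul]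
      simp [hf, hch]
  have H2 : ∑ t ∈ Finset.image (expOmitPen n) Finset.univ, f t
      = ∑ t ∈ Finset.range (n+1), f t := by
    rw [expOmitPen_image]
    rw [← Finset.add_sum_erase _ f (by simp : n - 1 ∈ Finset.range (n+1)), hfn1, zero_add]
  have H3 : ∑ t ∈ Finset.range (n+1), f t = ∑ t ∈ Finset.range (m+1), f t := by
    refine (Finset.sum_subset (Finset.range_subset_range.2 (by have := expOmitPen_le i; omega)) ?_).symm
    intro t _ ht
    have : m < t := by simp at ht; omega
    simp [hf, Nat.choose_eq_zero_of_lt this]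
  rw [H1, H2, H3, add_comm l x, add_pow]
  exact Finset.sum_congr rfl fun t _ => by ring

lemma shift_mul {n : ℕ} (hn : Even n) (hn0 : n ≠ 0) (l : F) (x : Fin n → F) :
    (Matrix.of fun i k : Fin n => ((expOmitPen n i).choose (expOmitPen n k) : F)
        * l ^ (expOmitPen n i - expOmitPen n k)) * gvand x (expOmitPen n)
    = gvand (fun j => l + x j) (expOmitPen n) := by
  ext i j
  rw [Matrix.mul_apply]
  show _ = (l + x j) ^ expOmitPen n i
  rw [shift_row hn hn0 l (x j) i]
  exact Finset.sum_congr rfl fun k _ => by simp [gvand]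

end Aux

lemma mds_core {F : Type*} [Field F] {n : ℕ} (hn0 : n ≠ 0)
    (x : Fin (n+n) → F) (hx : Function.Injective x)
    (hsum : ∀ R : Finset (Fin (n+n)), R.card = n → ∑ i ∈ R, x i ≠ 0)
    (V₁ V₂ A : Matrix (Fin n) (Fin n) F)
    (hV₁ : V₁ = gvand (fun i => x (Fin.castAdd n i)) (expOmitPen n))
    (hV₂ : V₂ = gvand (fun i => x (Fin.natAdd n i)) (expOmitPen n))
    (hVA : V₁ * A = V₂) (hdV₁ : V₁.det ≠ 0)
    (dg : ∀ z : Fin n → F, (gvand z (expOmitPen n)).det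
        = (∑ i, z i) * ∏ i, ∏ j ∈ Ioi i, (z j - z i))
    {k : ℕ} (r c : Fin k → Fin n) (hr : Function.Injective r) (hc : Function.Injective c) :
    (A.submatrix r c).det ≠ 0 := by
  classical
  set e : (Fin k) ⊕ ((Set.range r)ᶜ : Set (Fin n)) ≃ Fin n :=
    (Equiv.sumCongr (Equiv.ofInjective r hr) (Equiv.refl _)).trans
      (Equiv.Set.sumCompl (Set.range r)) with he
  have he1 : ∀ a, e (Sum.inl a) = r a := by intro a; simp [he]
  have he2 : ∀ u, e (Sum.inr u) = u.1 := by intro u; simp [he]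
  set φ : Fin n → Fin (n+n) := fun j =>
    Sum.elim (fun a => Fin.natAdd n (c a)) (fun u => Fin.castAdd n u.1) (e.symm j) with hφdef
  have hφ : Function.Injective φ := by
    intro j j' h
    apply e.symm.injective
    rcases h1 : e.symm j with a | u <;> rcases h2 : e.symm j' with a' | u' <;>
        rw [hφdef] at h <;> simp only [h1, h2, Sum.elim_inl, Sum.elim_inr] at h
    · have hv := congrArg Fin.val h
      simp only [Fin.coe_natAdd] at hv
      have : c a = c a' := Fin.ext (by omega)
      rw [hc this]
    · have hv := congrArg Fin.val h
      have := (u'.1).isLt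
      simp only [Fin.coe_natAdd, Fin.coe_castAdd] at hv
      omega
    · have hv := congrArg Fin.val h
      have := (u.1).isLt
      simp only [Fin.coe_natAdd, Fin.coe_castAdd] at hv
      omega
    · have hv := congrArg Fin.val h
      simp only [Fin.coe_castAdd] at hv
      rw [Subtype.ext (Fin.ext hv)]
  set N : Matrix (Fin n) (Fin n) F := Matrix.of fun s j =>
    Sum.elim (fun a => A s (c a)) (fun u => (1 : Matrix (Fin n) (Fin n) F) s u.1) (e.symm j)
    with hNdef
  have hVN : V₁ * N = gvand (x ∘ φ) (expOmitPen n) := by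
    ext i j
    rw [Matrix.mul_apply]
    rcases h1 : e.symm j with a | u
    · calc (∑ s, V₁ i s * N s j) = ∑ s, V₁ i s * A s (c a) :=
            Finset.sum_congr rfl fun s _ => by rw [hNdef]; simp [h1]
        _ = (V₁ * A) i (c a) := (Matrix.mul_apply).symm
        _ = V₂ i (c a) := by rw [hVA]
        _ = gvand (x ∘ φ) (expOmitPen n) i j := by
            rw [hV₂]; simp [gvand, hφdef, h1]
    · calc (∑ s, V₁ i s * N s j)
          = ∑ s, V₁ i s * (1 : Matrix (Fin n) (Fin n) F) s u.1 :=
            Finset.sum_congr rfl fun s _ => by rw [hNdef]; simp [h1]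
        _ = (V₁ * (1 : Matrix (Fin n) (Fin n) F)) i u.1 := (Matrix.mul_apply).symm
        _ = V₁ i u.1 := by rw [mul_one]
        _ = gvand (x ∘ φ) (expOmitPen n) i j := by
            rw [hV₁]; simp [gvand, hφdef, h1]
  have hG : (gvand (x ∘ φ) (expOmitPen n)).det ≠ 0 :=
    gvand_det_ne_zero hn0 x hx hsum φ hφ (dg _)
  have hN : N.det ≠ 0 := by
    intro h0
    have hd := congrArg Matrix.det hVN
    rw [Matrix.det_mul, h0, mul_zero] at hd
    exact hG hd.symm
  have hs1 : ∀ b, e.symm (r b) = Sum.inl b := fun b => by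
    rw [← he1 b, Equiv.symm_apply_apply]
  have hs2 : ∀ u : ((Set.range r)ᶜ : Set (Fin n)), e.symm u.1 = Sum.inr u := fun u => by
    rw [← he2 u, Equiv.symm_apply_apply]
  have hsub : N.submatrix e e = Matrix.fromBlocks (A.submatrix r c) 0
      (Matrix.of fun (u : ((Set.range r)ᶜ : Set (Fin n))) b => A u.1 (c b)) 1 := by
    ext s t
    rcases s with a | u <;> rcases t with b | u'
    · simp [hNdef, he1, hs1, Matrix.submatrix_apply]
    · have hne : r a ≠ u'.1 := fun hh => u'.2 ⟨a, hh⟩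
      simp [hNdef, he1, he2, hs2, Matrix.submatrix_apply, Matrix.one_apply_ne hne]
    · simp [hNdef, he1, he2, hs1, Matrix.submatrix_apply]
    · simp [hNdef, he2, hs2, Matrix.submatrix_apply, Matrix.one_apply, Subtype.ext_iff]
  have h1 : N.det = (A.submatrix r c).det := by
    rw [← Matrix.det_submatrix_equiv_self e N, hsub, Matrix.det_fromBlocks_zero₁₂,
      Matrix.det_one, mul_one]
  intro h0
  exact hN (by rw [h1, h0])


/-- involutory MDS matrices from generalized Vandermonde matrices
`V_⊥(·;{n-1})` over `F_{2^r}` with `n` even. -/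
theorem genVandermonde_omitPen_involutory_MDS {F : Type*} [Field F] [Fintype F] [CharP F 2]
    {n : ℕ} (hn : Even n)
    (x : Fin (n + n) → F) (l : F) (hl : l ≠ 0)
    (hshift : ∀ i : Fin n, x (Fin.natAdd n i) = l + x (Fin.castAdd n i))
    (hx : Function.Injective x)
    (hsum : ∀ R : Finset (Fin (n + n)), R.card = n → ∑ i ∈ R, x i ≠ 0)
    (V₁ V₂ : Matrix (Fin n) (Fin n) F)
    (hV₁ : V₁ = gvand (fun i => x (Fin.castAdd n i)) (expOmitPen n))
    (hV₂ : V₂ = gvand (fun i => x (Fin.natAdd n i)) (expOmitPen n)) :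
    IsUnit V₁.det ∧ IsUnit V₂.det ∧
      (V₁⁻¹ * V₂) * (V₁⁻¹ * V₂) = 1 ∧ IsMDS (V₁⁻¹ * V₂) := by
  rcases eq_or_ne n 0 with h0 | hn0
  · subst h0
    have hdet : ∀ M : Matrix (Fin 0) (Fin 0) F, M.det = 1 := fun M => Matrix.det_isEmpty
    refine ⟨by rw [hdet]; exact isUnit_one, by rw [hdet]; exact isUnit_one, ?_, ?_⟩
    · ext i j; exact i.elim0
    · intro k r c hr hc
      cases k with
      | zero => rw [Matrix.det_isEmpty]; exact one_ne_zero
      | succ k => exact (r 0).elim0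
  · have dg : ∀ z : Fin n → F, (gvand z (expOmitPen n)).det
        = (∑ i, z i) * ∏ i, ∏ j ∈ Finset.Ioi i, (z j - z i) := by
      obtain ⟨m, rfl⟩ : ∃ m, n = m + 1 := ⟨n - 1, by omega⟩
      exact fun z => det_gvand_pen m z
    have hcast : Function.Injective (fun i : Fin n => Fin.castAdd n i) :=
      fun a b h => Fin.castAdd_injective n n h
    have hnat : Function.Injective (fun i : Fin n => Fin.natAdd n i) := by
      intro a b h
      have hv : (Fin.natAdd n a).val = (Fin.natAdd n b).val := congrArg Fin.val h
      simp only [Fin.coe_natAdd] at hv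
      exact Fin.ext (by omega)
    have hd1 : V₁.det ≠ 0 := by
      rw [hV₁]
      exact gvand_det_ne_zero hn0 x hx hsum _ hcast (dg _)
    have hd2 : V₂.det ≠ 0 := by
      rw [hV₂]
      exact gvand_det_ne_zero hn0 x hx hsum _ hnat (dg _)
    have hLV1 : (Matrix.of fun i k : Fin n => ((expOmitPen n i).choose (expOmitPen n k) : F)
        * l ^ (expOmitPen n i - expOmitPen n k)) * V₁ = V₂ := by
      have hfun1 : (fun j : Fin n => l + x (Fin.castAdd n j)) = fun i => x (Fin.natAdd n i) :=
        funext fun j => (hshift j).symm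
      rw [hV₁, hV₂, shift_mul hn hn0 l, hfun1]
    have hLV2 : (Matrix.of fun i k : Fin n => ((expOmitPen n i).choose (expOmitPen n k) : F)
        * l ^ (expOmitPen n i - expOmitPen n k)) * V₂ = V₁ := by
      have hfun2 : (fun j : Fin n => l + x (Fin.natAdd n j)) = fun i => x (Fin.castAdd n i) :=
        funext fun j => by rw [hshift j, ← add_assoc, CharTwo.add_self_eq_zero, zero_add]
      rw [hV₁, hV₂, shift_mul hn hn0 l, hfun2]
    have hu1 : IsUnit V₁.det := isUnit_iff_ne_zero.mpr hd1
    have hinv : V₁ * V₁⁻¹ = 1 := Matrix.mul_nonsing_inv _ hu1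
    have hinv' : V₁⁻¹ * V₁ = 1 := Matrix.nonsing_inv_mul _ hu1
    have hkey : V₂ * (V₁⁻¹ * V₂) = V₁ := by
      calc V₂ * (V₁⁻¹ * V₂)
          = (Matrix.of fun i k : Fin n => ((expOmitPen n i).choose (expOmitPen n k) : F)
              * l ^ (expOmitPen n i - expOmitPen n k)) * V₁ * (V₁⁻¹ * V₂) := by rw [hLV1]
        _ = (Matrix.of fun i k : Fin n => ((expOmitPen n i).choose (expOmitPen n k) : F)
              * l ^ (expOmitPen n i - expOmitPen n k)) * ((V₁ * V₁⁻¹) * V₂) := by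
            rw [Matrix.mul_assoc, Matrix.mul_assoc]
        _ = (Matrix.of fun i k : Fin n => ((expOmitPen n i).choose (expOmitPen n k) : F)
              * l ^ (expOmitPen n i - expOmitPen n k)) * V₂ := by rw [hinv, Matrix.one_mul]
        _ = V₁ := hLV2
    refine ⟨hu1, isUnit_iff_ne_zero.mpr hd2, ?_, ?_⟩
    · calc (V₁⁻¹ * V₂) * (V₁⁻¹ * V₂)
          = V₁⁻¹ * (V₂ * (V₁⁻¹ * V₂)) := by rw [Matrix.mul_assoc]
        _ = V₁⁻¹ * V₁ := by rw [hkey]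
        _ = 1 := hinv'
    · intro k r c hr hc
      exact mds_core hn0 x hx hsum V₁ V₂ (V₁⁻¹ * V₂) hV₁ hV₂
        (by rw [← Matrix.mul_assoc, hinv, Matrix.one_mul]) hd1 dg r c hr hc
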